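/- Let t > 0 and F(x) = |x| + (x − t)²/(2t). Then for all real numbers a ≤ b ≤ 0, the conditional ratio (∫_{Ta}^{Tb} exp(−F(x)/T) dx) / (∫_{−∞}^0 exp(−F(x)/T) dx) converges, as T → 0⁺, to ∫_a^b 2 e^{2x} dx. In other words, conditionally on the event [X_T(t,t) < 0], the random variable X_T(t,t)/T converges in distribution to −E(2), where E(2) is exponential with rate 2 (density 2e^{−2x} on x > 0). -/

import Mathlib

/-!
Substituting `x = T u`, on `u ≤ 0` the Gibbs density factors as
`exp (-F(T u) / T) = exp (-t / (2T)) · exp (2u - T u² / (2t))`. The prefactor `T exp (-t / (2T))`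
cancels in the ratio, and by dominated convergence (with dominating function `exp (2u)`) the
ratio tends to `∫_a^b e^{2u} du / ∫_{-∞}^0 e^{2u} du = 2 ∫_a^b e^{2u} du`.
-/

open Filter MeasureTheory Set Topology
open scoped Pointwise

/-- The one-dimensional objective `F(x) = |x| + (x − y)²/(2t)`. -/
noncomputable def obj1 (y t x : ℝ) : ℝ := |x| + (x - y) ^ 2 / (2 * t)

lemma neg_obj1_self_mul_div {t T u : ℝ} (ht : t ≠ 0) (hT : 0 < T) (hu : u ≤ 0) :
    -obj1 t t (T * u) / T = -t / (2 * T) + (2 * u - T * u ^ 2 / (2 * t)) := by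
  rw [obj1, abs_of_nonpos (mul_nonpos_of_nonneg_of_nonpos hT.le hu)]
  field_simp
  ring

lemma setIntegral_exp_neg_obj1_div_smul {t T : ℝ} {s : Set ℝ} (ht : t ≠ 0) (hT : 0 < T)
    (hs : MeasurableSet s) (hs0 : s ⊆ Iic 0) :
    ∫ x in T • s, Real.exp (-obj1 t t x / T) =
      T * Real.exp (-t / (2 * T)) * ∫ u in s, Real.exp (2 * u - T * u ^ 2 / (2 * t)) := by
  have hscale := Measure.setIntegral_comp_smul_of_pos volume
    (fun x => Real.exp (-obj1 t t x / T)) s hT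
  rw [Module.finrank_self, pow_one, smul_eq_mul] at hscale
  have hsplit : ∫ u in s, Real.exp (-obj1 t t (T • u) / T) =
      Real.exp (-t / (2 * T)) * ∫ u in s, Real.exp (2 * u - T * u ^ 2 / (2 * t)) := by
    rw [← integral_const_mul]
    refine setIntegral_congr_fun hs fun u hu => ?_
    rw [smul_eq_mul, neg_obj1_self_mul_div ht hT (hs0 hu), Real.exp_add]
  rw [hsplit, eq_inv_mul_iff_mul_eq₀ hT.ne'] at hscale
  rw [← hscale, mul_assoc]

lemma tendsto_setIntegral_exp_two_mul_sub {t : ℝ} {s : Set ℝ} (ht : 0 ≤ t) (hs0 : s ⊆ Iic 0) :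
    Tendsto (fun T => ∫ u in s, Real.exp (2 * u - T * u ^ 2 / (2 * t))) (𝓝[>] 0)
      (𝓝 (∫ u in s, Real.exp (2 * u))) := by
  refine tendsto_integral_filter_of_dominated_convergence (fun u => Real.exp (2 * u))
    (Eventually.of_forall fun T => (by fun_prop : Continuous _).aestronglyMeasurable) ?_
    ((integrableOn_exp_mul_Iic two_pos 0).mono_set hs0) (ae_of_all _ fun u => ?_)
  · filter_upwards [self_mem_nhdsWithin] with T (hT : 0 < T)
    refine ae_of_all _ fun u => ?_
    rw [Real.norm_eq_abs, Real.abs_exp, Real.exp_le_exp]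
    have : 0 ≤ T * u ^ 2 / (2 * t) := by positivity
    linarith
  · have hcont : Continuous fun T : ℝ => Real.exp (2 * u - T * u ^ 2 / (2 * t)) := by fun_prop
    simpa using (hcont.tendsto 0).mono_left nhdsWithin_le_nhds

/-- For `y = t`, conditionally on `[X_T < 0]`, `X_T/T` converges in distribution to
`−E(2)` where `E(2)` is exponential with rate `2`. -/
theorem stmt10 (t : ℝ) (ht : 0 < t) (a b : ℝ) (hab : a ≤ b) (hb : b ≤ 0) :
    Tendsto
      (fun T : ℝ =>
        (∫ x in (T * a)..(T * b), Real.exp (-(obj1 t t x) / T)) /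
          ∫ x in Set.Iic (0 : ℝ), Real.exp (-(obj1 t t x) / T))
      (nhdsWithin 0 (Set.Ioi 0))
      (nhds (∫ x in a..b, 2 * Real.exp (2 * x))) := by
  have hIoc : Ioc a b ⊆ Iic 0 := Ioc_subset_Iic_self.trans (Iic_subset_Iic.2 hb)
  have hlim := (tendsto_setIntegral_exp_two_mul_sub ht.le hIoc).div
    (tendsto_setIntegral_exp_two_mul_sub ht.le subset_rfl) (by simp [integral_exp_mul_Iic])
  rw [integral_exp_mul_Iic two_pos, mul_zero, Real.exp_zero] at hlim
  convert hlim.congr' ?_ using 2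
  · rw [intervalIntegral.integral_const_mul, intervalIntegral.integral_of_le hab]
    ring
  · filter_upwards [self_mem_nhdsWithin] with T (hT : 0 < T)
    have hnum := setIntegral_exp_neg_obj1_div_smul ht.ne' hT measurableSet_Ioc hIoc
    have hden := setIntegral_exp_neg_obj1_div_smul ht.ne' hT measurableSet_Iic subset_rfl
    rw [LinearOrderedField.smul_Ioc hT] at hnum
    rw [LinearOrderedField.smul_Iic hT, mul_zero] at hden
    rw [Pi.div_apply, intervalIntegral.integral_of_le (mul_le_mul_of_nonneg_left hab hT.le),
      hnum, hden, mul_div_mul_left _ _ (by positivity)]
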